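/- arXiv:1607.00877 — 3 statements merged into one kernel-verified Lean document; each statement's English description precedes it below -/
import Mathlib

section
/- Let A, B ∈ ℂ[x,y] be homogeneous of degree d with gcd(A,B)=1. Suppose B(x,y) = (x − x₀y)^τ · P(x,y) − x₀·A(x,y) for some x₀ ∈ ℂ, integer τ ≥ 1, and homogeneous P of degree d−τ with P(x₀,1) ≠ 0. Then the polynomial D := A_x B_y − A_y B_x factors as D = −(x − x₀y)^{τ−1}·Q(x,y) with Q homogeneous and Q(x₀,1) = τ·P(x₀,1)·d·A(x₀,1). -/
/-!
Put `L = x − x₀y`. Differentiating `B = L^τ P − x₀ A`, the `x₀ A` part contributes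
`−x₀ (A_x A_y − A_y A_x) = 0` to the Jacobian, so
`A_x B_y − A_y B_x = L^{τ−1} (τ P (A_x L_y − A_y L_x) + L (A_x P_y − A_y P_x))`,
and `L_x = 1`, `L_y = −x₀` turn this into `−L^{τ−1} Q` with
`Q = τ P (x₀ A_x + A_y) − L (A_x P_y − A_y P_x)`. At `(x₀, 1)` the factor `L` vanishes and
Euler's identity gives `x₀ A_x + A_y = d A`.
-/

open MvPolynomial

namespace MvPolynomial

variable {σ R : Type*}

lemma IsHomogeneous.pderiv_eq_zero [CommSemiring R] {φ : MvPolynomial σ R}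
    (hφ : φ.IsHomogeneous 0) (i : σ) : pderiv i φ = 0 := by
  rw [← totalDegree_zero_iff_isHomogeneous, totalDegree_eq_zero_iff_eq_C] at hφ
  rw [hφ, pderiv_C]

/- `χ` is part of the product so that the degree can be written `l + n + m - 2`, which stays
correct under truncated subtraction when `φ` or `ψ` is constant (the product is then `0`). -/
lemma IsHomogeneous.mul_pderiv_mul_pderiv [CommSemiring R] {χ φ ψ : MvPolynomial σ R}
    {l n m : ℕ} (hχ : χ.IsHomogeneous l) (hφ : φ.IsHomogeneous n) (hψ : ψ.IsHomogeneous m)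
    (i j : σ) : (χ * (pderiv i φ * pderiv j ψ)).IsHomogeneous (l + n + m - 2) := by
  rcases Nat.eq_zero_or_pos n with rfl | hn
  · rw [hφ.pderiv_eq_zero, zero_mul, mul_zero]
    exact isHomogeneous_zero _ _ _
  rcases Nat.eq_zero_or_pos m with rfl | hm
  · rw [hψ.pderiv_eq_zero, mul_zero, mul_zero]
    exact isHomogeneous_zero _ _ _
  convert hχ.mul ((hφ.pderiv (i := i)).mul (hψ.pderiv (i := j))) using 1
  omega

lemma pderiv_mul_pderiv_sub_of_eq_pow_mul_sub [CommRing R] {A B L P : MvPolynomial σ R}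
    {c : R} {k : ℕ} (hB : B = L ^ (k + 1) * P - C c * A) (i j : σ) :
    pderiv i A * pderiv j B - pderiv j A * pderiv i B =
      L ^ k * ((k + 1 : ℕ) * P * (pderiv i A * pderiv j L - pderiv j A * pderiv i L) +
        L * (pderiv i A * pderiv j P - pderiv j A * pderiv i P)) := by
  subst hB
  simp only [map_sub, pderiv_mul, pderiv_pow, pderiv_C, Nat.add_sub_cancel]
  ring

end MvPolynomial

theorem stmt_3_general (d τ : ℕ) (hτ : 1 ≤ τ) (hτd : τ ≤ d)
    (A B P : MvPolynomial (Fin 2) ℂ) (x₀ : ℂ)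
    (hA : A.IsHomogeneous d) (hP : P.IsHomogeneous (d - τ))
    (hB : B = (X 0 - C x₀ * X 1) ^ τ * P - C x₀ * A) :
    ∃ Q : MvPolynomial (Fin 2) ℂ, Q.IsHomogeneous (2 * d - τ - 1) ∧
      pderiv 0 A * pderiv 1 B - pderiv 1 A * pderiv 0 B
        = -((X 0 - C x₀ * X 1) ^ (τ - 1) * Q) ∧
      eval ![x₀, 1] Q = (τ : ℂ) * eval ![x₀, 1] P * (d : ℂ) * eval ![x₀, 1] A := by
  obtain ⟨k, rfl⟩ : ∃ k, τ = k + 1 := ⟨τ - 1, by omega⟩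
  set L : MvPolynomial (Fin 2) ℂ := X 0 - C x₀ * X 1
  refine ⟨C ((k + 1 : ℕ) : ℂ) * P * (C x₀ * pderiv 0 A + pderiv 1 A)
    - L * (pderiv 0 A * pderiv 1 P - pderiv 1 A * pderiv 0 P), ?_, ?_, ?_⟩
  · have hL : L.IsHomogeneous 1 := (isHomogeneous_X ℂ 0).sub (isHomogeneous_C_mul_X x₀ 1)
    have hPA := (hP.C_mul ((k + 1 : ℕ) : ℂ)).mul
      ((hA.pderiv (i := 0) |>.C_mul x₀).add (hA.pderiv (i := 1)))
    have hLJ := (hL.mul_pderiv_mul_pderiv hA hP 0 1).sub (hL.mul_pderiv_mul_pderiv hA hP 1 0)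
    rw [show d - (k + 1) + (d - 1) = 2 * d - (k + 1) - 1 by omega] at hPA
    rw [show 1 + d + (d - (k + 1)) - 2 = 2 * d - (k + 1) - 1 by omega, ← mul_sub] at hLJ
    exact hPA.sub hLJ
  · have hLx : pderiv 0 L = 1 := by simp [L]
    have hLy : pderiv 1 L = -C x₀ := by simp [L]
    rw [pderiv_mul_pderiv_sub_of_eq_pow_mul_sub hB, hLx, hLy, Nat.add_sub_cancel, ← C_eq_coe_nat]
    ring
  · have hL : eval ![x₀, 1] L = 0 := by simp [L]
    have hEuler := congrArg (eval ![x₀, 1]) hA.sum_X_mul_pderiv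
    simp only [Fin.sum_univ_two, map_add, map_mul, map_natCast, eval_X, Matrix.cons_val_zero,
      Matrix.cons_val_one, one_mul, nsmul_eq_mul] at hEuler
    simp only [map_sub, map_add, map_mul, eval_C, hL, zero_mul, sub_zero, hEuler]
    push_cast
    ring

/-- If `A, B` are coprime homogeneous of degree `d` with
`B = (x − x₀y)^τ·P − x₀·A`, `P` homogeneous of degree `d−τ`, `P(x₀,1) ≠ 0`,
then `A_x B_y − A_y B_x = −(x − x₀y)^{τ−1}·Q` with `Q` homogeneous and
`Q(x₀,1) = τ·P(x₀,1)·d·A(x₀,1)`. -/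
theorem stmt_3 (d τ : ℕ) (hτ : 1 ≤ τ) (hτd : τ ≤ d)
    (A B P : MvPolynomial (Fin 2) ℂ) (x₀ : ℂ)
    (hA : A.IsHomogeneous d) (hP : P.IsHomogeneous (d - τ))
    (hrel : IsRelPrime A B)
    (hB : B = (X 0 - C x₀ * X 1) ^ τ * P - C x₀ * A)
    (hP0 : eval ![x₀, 1] P ≠ 0) :
    ∃ Q : MvPolynomial (Fin 2) ℂ, Q.IsHomogeneous (2 * d - τ - 1) ∧
      pderiv 0 A * pderiv 1 B - pderiv 1 A * pderiv 0 B
        = -((X 0 - C x₀ * X 1) ^ (τ - 1) * Q) ∧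
      eval ![x₀, 1] Q = (τ : ℂ) * eval ![x₀, 1] P * (d : ℂ) * eval ![x₀, 1] A :=
  stmt_3_general d τ hτ hτd A B P x₀ hA hP hB
end

section
/- Every rational map f : P¹(ℂ) → P¹(ℂ) of degree d ≥ 2 has at least one fixed point which is not a critical point of f. -/
/-!
Put `F = a - X b`, whose roots are the finite fixed points, and `P = a' - X b'`. At a root `z`
of `F` coprimality gives `b z ≠ 0`, and the Wronskian equals `P z * b z`, while
`F' = P - b`. So if every finite fixed point were critical, `P` would vanish at every root of
`F` and every such root would be simple; unless `∞` is a non-critical fixed point,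
`deg P < deg F`, hence `P = 0`, i.e. `a' = X b'`. But this forces `deg a = deg b + 1`, which is
exactly the case where `∞` is a non-critical fixed point.
-/

open Polynomial

namespace Polynomial

theorem eq_zero_of_forall_isRoot_of_natDegree_lt {k : Type*} [Field k] [IsAlgClosed k]
    {F P : k[X]} (hF : F ≠ 0) (hsimple : ∀ z, F.IsRoot z → ¬ (derivative F).IsRoot z)
    (hP : ∀ z, F.IsRoot z → P.IsRoot z) (hdeg : P.natDegree < F.natDegree) : P = 0 := by
  classical
  have hnodup : F.roots.Nodup := by
    refine Multiset.nodup_iff_count_le_one.mpr fun z => ?_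
    rw [count_roots]
    by_contra! hlt
    rw [one_lt_rootMultiplicity_iff_isRoot hF] at hlt
    exact hsimple z hlt.1 hlt.2
  refine eq_zero_of_natDegree_lt_card_of_eval_eq_zero' P F.roots.toFinset
    (fun z hz => hP z ((mem_roots hF).mp (Multiset.mem_toFinset.mp hz))) ?_
  rwa [Multiset.toFinset_card_of_nodup hnodup, ← (IsAlgClosed.splits F).natDegree_eq_card_roots]

theorem derivative_sub_X_mul {R : Type*} [CommRing R] (a b : R[X]) :
    derivative (a - X * b) = derivative a - X * derivative b - b := by
  simp only [derivative_sub, derivative_mul, derivative_X]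
  ring

theorem natDegree_derivative_sub_X_mul_lt {R : Type*} [CommRing R] [Nontrivial R] {a b : R[X]}
    (hb : b ≠ 0) (hab : a.natDegree ≠ b.natDegree + 1) :
    (derivative a - X * derivative b).natDegree < (a - X * b).natDegree := by
  have hF : (a - X * b).natDegree = max a.natDegree (b.natDegree + 1) := by
    rcases hab.lt_or_gt with h | h
    · rw [natDegree_sub_eq_right_of_natDegree_lt (by rwa [natDegree_X_mul hb]),
        natDegree_X_mul hb]
      omega
    · rw [natDegree_sub_eq_left_of_natDegree_lt (by rwa [natDegree_X_mul hb])]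
      omega
  rw [← sub_add_cancel (derivative a - X * derivative b) b, ← derivative_sub_X_mul]
  have := natDegree_derivative_le (a - X * b)
  exact (natDegree_add_le _ _).trans_lt (by omega)

theorem natDegree_eq_add_one_of_derivative_eq_X_mul_derivative {R : Type*} [CommRing R]
    [Nontrivial R] [IsAddTorsionFree R] {a b : R[X]} (h : derivative a = X * derivative b)
    (hb : b.natDegree ≠ 0) : a.natDegree = b.natDegree + 1 := by
  have hb' : derivative b ≠ 0 := by rwa [Ne, derivative_eq_zero]
  have := congrArg natDegree h
  rw [natDegree_X_mul hb', natDegree_derivative, natDegree_derivative] at this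
  omega

end Polynomial

/-- Every rational map `f = a/b` of degree `d ≥ 2` on `P¹(ℂ)` has a fixed point
which is not critical: either `∞` is a non-critical fixed point
(which for `deg a > deg b` means exactly `deg a = deg b + 1`), or there is
`z ∈ ℂ` with `f z = z` (i.e. `a z = z·b z`) at which the Wronskian
`a'b − ab'` does not vanish. -/
theorem stmt_5 (d : ℕ) (hd : 2 ≤ d) (a b : Polynomial ℂ)
    (hab : IsCoprime a b) (hdeg : max a.natDegree b.natDegree = d) :
    a.natDegree = b.natDegree + 1 ∨
      ∃ z : ℂ, a.eval z = z * b.eval z ∧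
        (derivative a * b - a * derivative b).eval z ≠ 0 := by
  by_contra! ⟨hinf, hcrit⟩
  set F := a - X * b with hFdef
  set P := derivative a - X * derivative b with hPdef
  have hb0 : b ≠ 0 := by
    rintro rfl
    have := natDegree_eq_zero_of_isUnit (isCoprime_zero_right.mp hab)
    rw [natDegree_zero] at hdeg
    omega
  have hfix : ∀ z, F.IsRoot z → a.eval z = z * b.eval z := fun z hz => by
    simpa [hFdef, sub_eq_zero] using hz
  have hbz : ∀ z, F.IsRoot z → b.eval z ≠ 0 := fun z hz hbz => by
    obtain ⟨u, v, huv⟩ := hab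
    simpa [hfix z hz, hbz] using congrArg (eval z) huv
  have hP : ∀ z, F.IsRoot z → P.IsRoot z := fun z hz => by
    have hW : (derivative a * b - a * derivative b).eval z = P.eval z * b.eval z := by
      simp only [hPdef, eval_sub, eval_mul, eval_X, hfix z hz]
      ring
    exact (mul_eq_zero.mp (hW ▸ hcrit z (hfix z hz))).resolve_right (hbz z hz)
  have hsimple : ∀ z, F.IsRoot z → ¬ (derivative F).IsRoot z := fun z hz => by
    rw [IsRoot.def, hFdef, derivative_sub_X_mul, ← hPdef, eval_sub, (hP z hz).eq_zero, zero_sub,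
      neg_eq_zero]
    exact hbz z hz
  have hlt : P.natDegree < F.natDegree := natDegree_derivative_sub_X_mul_lt hb0 hinf
  have hP0 := eq_zero_of_forall_isRoot_of_natDegree_lt (ne_zero_of_natDegree_gt hlt) hsimple hP hlt
  have ha' : derivative a = X * derivative b := sub_eq_zero.mp hP0
  by_cases hbc : b.natDegree = 0
  · rw [derivative_of_natDegree_zero hbc, mul_zero, derivative_eq_zero] at ha'
    omega
  · exact hinf (natDegree_eq_add_one_of_derivative_eq_X_mul_derivative ha' hbc)
end

section
/- Let A, B ∈ ℂ[x,y]₃ be homogeneous of degree 3 and let T = (ax+by = 0) be a line with (a,b) ≠ (0,0). Define P(x,y) = (A(x,y)·B(b,−a) − B(x,y)·A(b,−a))/(ax+by)², assumed polynomial (so P is homogeneous linear), and Q(x,y) = P_x·B(b,−a) − P_y·A(b,−a). Writing ã = A(b,−a), b̃ = B(b,−a) and C(x,y) = x·A(x,y) + y·B(x,y), if C(b,−a) ≠ 0 then Q(b,−a) = C(b̃, −ã)/(C(b,−a))². -/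
/-!
Cancelling the homogeneous factor `(ax+by)²` from a cubic shows that `P` is a linear form, so
`P_x, P_y` are constants and `Q(b,−a) = b̃ P_x − ã P_y = P(b̃,−ã)` by Euler's identity. Evaluating
the defining identity of `P` at `(b̃,−ã)` turns its left side into `C(b̃,−ã)` and the factor
`a b̃ − b ã` into `−C(b,−a)`.
-/

open MvPolynomial

namespace MvPolynomial

variable {σ R : Type*}

attribute [local instance] MvPolynomial.gradedAlgebra in
theorem homogeneousComponent_add_mul_of_isHomogeneous_left [CommSemiring R]
    {q : MvPolynomial σ R} {m : ℕ} (hq : q.IsHomogeneous m) (k : ℕ) (p : MvPolynomial σ R) :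
    homogeneousComponent (m + k) (q * p) = q * homogeneousComponent k p := by
  have h := DirectSum.coe_decompose_mul_of_left_mem_of_le (homogeneousSubmodule σ R) (b := p) hq
    (Nat.le_add_right m k)
  rw [Nat.add_sub_cancel_left] at h
  rwa [← decomposition.decompose'_apply, ← decomposition.decompose'_apply]

theorem IsHomogeneous.of_mul_left [CommRing R] [IsDomain R] {q p : MvPolynomial σ R} {m n : ℕ}
    (hq : q.IsHomogeneous m) (hq0 : q ≠ 0) (h : (q * p).IsHomogeneous (m + n)) :
    p.IsHomogeneous n := by
  have hcomp : q * p = q * homogeneousComponent n p := by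
    rw [← homogeneousComponent_add_mul_of_isHomogeneous_left hq, homogeneousComponent_eq_self h]
  rw [mul_left_cancel₀ hq0 hcomp]
  exact homogeneousComponent_isHomogeneous n p

theorem IsHomogeneous.eval_eq_of_zero [CommSemiring R] {p : MvPolynomial σ R}
    (hp : p.IsHomogeneous 0) (v w : σ → R) : eval v p = eval w p := by
  rw [← totalDegree_zero_iff_isHomogeneous, totalDegree_eq_zero_iff_eq_C] at hp
  rw [hp, eval_C, eval_C]

theorem IsHomogeneous.sum_mul_eval_pderiv_of_one [CommSemiring R] [Fintype σ]
    {p : MvPolynomial σ R} (hp : p.IsHomogeneous 1) (v w : σ → R) :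
    ∑ i, v i * eval w (pderiv i p) = eval v p := by
  have euler := congrArg (eval v) hp.sum_X_mul_pderiv
  simp only [map_sum, eval_mul, eval_X, one_smul] at euler
  rw [← euler]
  exact Finset.sum_congr rfl fun i _ => by rw [hp.pderiv.eval_eq_of_zero w v]

theorem C_mul_X_zero_add_C_mul_X_one_ne_zero [CommSemiring R] {a b : R} (hab : (a, b) ≠ (0, 0)) :
    (C a * X 0 + C b * X 1 : MvPolynomial (Fin 2) R) ≠ 0 := by
  intro h
  have ha := congrArg (eval ![1, 0]) h
  have hb := congrArg (eval ![0, 1]) h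
  simp at ha hb
  exact hab (Prod.ext ha hb)

end MvPolynomial

/-- For homogeneous cubics `A, B`, a line `T = (ax+by=0)`, and
`P = (A·B(b,−a) − B·A(b,−a))/(ax+by)²`, setting `ã = A(b,−a)`, `b̃ = B(b,−a)`,
`Q = P_x·b̃ − P_y·ã` and `C(x,y) = xA + yB`, if `C(b,−a) ≠ 0` then
`Q(b,−a) = C(b̃,−ã)/(C(b,−a))²`. -/
theorem stmt_9 (A B : MvPolynomial (Fin 2) ℂ)
    (hA : A.IsHomogeneous 3) (hB : B.IsHomogeneous 3)
    (a b : ℂ) (hab : (a, b) ≠ (0, 0))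
    (P : MvPolynomial (Fin 2) ℂ)
    (hP : A * C (eval ![b, -a] B) - B * C (eval ![b, -a] A)
        = (C a * X 0 + C b * X 1) ^ 2 * P)
    (hC : eval ![b, -a] (X 0 * A + X 1 * B) ≠ 0) :
    eval ![b, -a] (pderiv 0 P * C (eval ![b, -a] B) - pderiv 1 P * C (eval ![b, -a] A))
      = eval ![eval ![b, -a] B, -(eval ![b, -a] A)] (X 0 * A + X 1 * B)
        / (eval ![b, -a] (X 0 * A + X 1 * B)) ^ 2 := by
  set ta := eval ![b, -a] A with hta
  set tb := eval ![b, -a] B with htb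
  have hl : (C a * X 0 + C b * X 1 : MvPolynomial (Fin 2) ℂ).IsHomogeneous 1 :=
    (isHomogeneous_C_mul_X a 0).add (isHomogeneous_C_mul_X b 1)
  have hPlin : P.IsHomogeneous 1 := by
    refine (hl.pow 2).of_mul_left (pow_ne_zero 2 (C_mul_X_zero_add_C_mul_X_one_ne_zero hab)) ?_
    rw [← hP]
    exact (hA.mul (isHomogeneous_C _ tb)).sub (hB.mul (isHomogeneous_C _ ta))
  have hQ : eval ![b, -a] (pderiv 0 P * C tb - pderiv 1 P * C ta) = eval ![tb, -ta] P := by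
    rw [← hPlin.sum_mul_eval_pderiv_of_one ![tb, -ta] ![b, -a], Fin.sum_univ_two]
    simp only [eval_sub, eval_mul, eval_C, Matrix.cons_val_zero, Matrix.cons_val_one]
    ring
  have hPeval := congrArg (eval ![tb, -ta]) hP
  rw [hQ]
  simp only [eval_sub, eval_add, eval_mul, eval_pow, eval_C, eval_X,
    Matrix.cons_val_zero, Matrix.cons_val_one, ← hta, ← htb] at hPeval hC ⊢
  rw [eq_div_iff (pow_ne_zero 2 hC)]
  linear_combination -hPeval
end
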